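/- For a unital CPTP map Λ on ℂ^{d_A} and G = 1 − (1/d_A²)Tr[S(Λ⊗Λ)(S)], one has G ≤ 1 − 1/d_A², with equality if and only if Λ is the completely depolarizing map T(X) = Tr(X) I/d_A. -/

import Mathlib

/-
Writing `J` for the Choi matrix of `Λ`, one has `Tr[S (Λ ⊗ Λ)(S)] = Tr(J²)`, and trace
preservation gives `Tr J = d`. With `M = J − I/d` (Hermitian, since `J` is), expanding the square
gives `Tr(J²) = 1 + Tr(Mᴴ M)`, so `G = 1 − 1/d² − ‖M‖²_F / d²`. Hence `G ≤ 1 − 1/d²`, with equality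
iff `M = 0`, i.e. iff `J = I/d`, which is the Choi matrix of the completely depolarizing map;
the Choi matrix determines a linear map.
-/

open Matrix Kronecker BigOperators MeasureTheory ComplexOrder

noncomputable section

/-- The swap operator on `ℂ^{d_A} ⊗ ℂ^{d_A}`. -/
def swapOp (d : ℕ) : Matrix (Fin d × Fin d) (Fin d × Fin d) ℂ :=
  Matrix.of fun p q => if p.1 = q.2 ∧ p.2 = q.1 then 1 else 0

/-- The tensor product `Φ ⊗ Ψ` of two linear maps on `d × d` matrices, acting on
operators over `ℂ^d ⊗ ℂ^d`. -/
def tensorOp (d : ℕ)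
    (Φ Ψ : Matrix (Fin d) (Fin d) ℂ → Matrix (Fin d) (Fin d) ℂ)
    (M : Matrix (Fin d × Fin d) (Fin d × Fin d) ℂ) :
    Matrix (Fin d × Fin d) (Fin d × Fin d) ℂ :=
  Matrix.of fun p q => ∑ e : Fin d, ∑ f : Fin d, ∑ e' : Fin d, ∑ f' : Fin d,
    Φ (Matrix.single e f 1) p.1 q.1 * Ψ (Matrix.single e' f' 1) p.2 q.2 *
      M (e, e') (f, f')

/-- `G = 1 − (1/d²) Tr[S (Λ ⊗ Λ)(S)]` for a map `Λ` on `d × d` matrices. -/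
def GOfMap (d : ℕ) (Λ : Matrix (Fin d) (Fin d) ℂ → Matrix (Fin d) (Fin d) ℂ) : ℝ :=
  1 - (1 / (d : ℝ)^2) * (Matrix.trace (swapOp d * tensorOp d Λ Λ (swapOp d))).re

/-- The rank-one projector `|u⟩⟨u|` as a matrix. -/
def pureState (d : ℕ) (u : Fin d → ℂ) : Matrix (Fin d) (Fin d) ℂ :=
  Matrix.of fun a c => u a * star (u c)

namespace Matrix

variable {n R : Type*} [Fintype n] [DecidableEq n]

theorem trace_mul_self_eq_trace_sub_smul_one_sq [CommRing R] {A : Matrix n n R} {c : R}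
    (h : A.trace = Fintype.card n * c) :
    (A * A).trace = ((A - c • 1) * (A - c • 1)).trace + Fintype.card n * c ^ 2 := by
  simp only [sub_mul, mul_sub, Matrix.smul_mul, Matrix.mul_smul, mul_one, one_mul, trace_sub,
    trace_smul, trace_one, h, smul_eq_mul]
  ring

end Matrix

open Matrix

section Choi

variable {n R : Type*} [Fintype n] [DecidableEq n]

def choi [Zero R] [One R] (Φ : Matrix n n R → Matrix n n R) : Matrix (n × n) (n × n) R :=
  Matrix.of fun p q => Φ (single p.1 q.1 1) p.2 q.2

theorem trace_choi [Semiring R] {Φ : Matrix n n R → Matrix n n R}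
    (hΦ : ∀ X, (Φ X).trace = X.trace) :
    (choi Φ).trace = Fintype.card n := by
  have hdiag (i : n) : ∑ a, Φ (single i i 1) a a = 1 := by
    simpa [trace_single_eq_same, trace] using hΦ (single i i 1)
  simp [trace, choi, Fintype.sum_prod_type, hdiag]

theorem choi_inj [Semiring R] {Φ Ψ : Matrix n n R →ₗ[R] Matrix n n R} :
    choi ⇑Φ = choi ⇑Ψ ↔ Φ = Ψ := by
  refine ⟨fun h => ext_linearMap R fun i j => LinearMap.ext_ring ?_, fun h => h ▸ rfl⟩
  ext a b
  exact congr_fun (congr_fun h (i, a)) (j, b)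

end Choi

section Depolarizing

variable (n K : Type*) [Fintype n] [DecidableEq n] [Field K]

def depolarizing : Matrix n n K →ₗ[K] Matrix n n K :=
  (traceLinearMap n K K).smulRight ((Fintype.card n : K)⁻¹ • 1)

variable {n K}

theorem depolarizing_apply (X : Matrix n n K) :
    depolarizing n K X = (X.trace / Fintype.card n) • 1 := by
  simp [depolarizing, smul_smul, div_eq_mul_inv]

theorem choi_depolarizing : choi ⇑(depolarizing n K) = (Fintype.card n : K)⁻¹ • 1 := by
  ext ⟨i, a⟩ ⟨j, b⟩
  by_cases hij : i = j
  · subst hij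
    by_cases hab : a = b <;> simp [choi, depolarizing_apply, one_apply, hab, div_eq_inv_mul]
  · simp [choi, depolarizing_apply, trace_single_eq_of_ne _ _ _ hij, one_apply, hij]

end Depolarizing

theorem trace_swapOp_mul_tensorOp_swapOp (d : ℕ)
    (Φ Ψ : Matrix (Fin d) (Fin d) ℂ → Matrix (Fin d) (Fin d) ℂ) :
    (swapOp d * tensorOp d Φ Ψ (swapOp d)).trace = (choi Φ * choi Ψ).trace := by
  simp only [trace, diag, mul_apply, swapOp, tensorOp, choi, of_apply, Fintype.sum_prod_type,
    ite_and, mul_ite, mul_one, mul_zero, ite_mul, zero_mul, one_mul, Finset.sum_ite_eq,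
    Finset.sum_ite_eq', Finset.mem_univ, if_true]
  -- both sides are `∑ i j a b, Φ (single i j 1) a b * Ψ (single j i 1) b a`, summed in another order
  rw [Finset.sum_comm]
  conv_lhs => enter [2, b]; rw [Finset.sum_comm]
  conv_lhs => enter [2, b, 2, e]; rw [Finset.sum_comm]
  rw [Finset.sum_comm]

theorem GOfMap_eq_of_trace_preserving {d : ℕ} (hd : 0 < d)
    {Λ : Matrix (Fin d) (Fin d) ℂ → Matrix (Fin d) (Fin d) ℂ} (hTP : ∀ X, (Λ X).trace = X.trace) :
    GOfMap d Λ = 1 - 1 / (d : ℝ) ^ 2 -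
      ((choi Λ - (d : ℂ)⁻¹ • 1) * (choi Λ - (d : ℂ)⁻¹ • 1)).trace.re / (d : ℝ) ^ 2 := by
  have hd' : (d : ℂ) ≠ 0 := Nat.cast_ne_zero.mpr hd.ne'
  have hcard : (Fintype.card (Fin d × Fin d) : ℂ) = d ^ 2 := by simp [sq]
  have htrace : (choi Λ).trace = Fintype.card (Fin d × Fin d) * (d : ℂ)⁻¹ := by
    rw [trace_choi hTP, hcard, Fintype.card_fin]
    field_simp
  have hone : (d : ℂ) ^ 2 * (d : ℂ)⁻¹ ^ 2 = 1 := by field_simp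
  rw [GOfMap, trace_swapOp_mul_tensorOp_swapOp,
    trace_mul_self_eq_trace_sub_smul_one_sq htrace, hcard, hone, Complex.add_re, Complex.one_re]
  ring

theorem otoc_max_depolarizing_general (dA : ℕ) (hdA : 0 < dA)
    (Λ : Matrix (Fin dA) (Fin dA) ℂ →ₗ[ℂ] Matrix (Fin dA) (Fin dA) ℂ)
    (hCP : (Matrix.of fun p q : Fin dA × Fin dA =>
      Λ (Matrix.single p.1 q.1 1) p.2 q.2).PosSemidef)
    (hTP : ∀ X, Matrix.trace (Λ X) = Matrix.trace X) :
    GOfMap dA (fun X => Λ X) ≤ 1 - 1 / (dA : ℝ)^2 ∧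
    (GOfMap dA (fun X => Λ X) = 1 - 1 / (dA : ℝ)^2 ↔
      ∀ X, Λ X = (Matrix.trace X / dA) • (1 : Matrix (Fin dA) (Fin dA) ℂ)) := by
  set M := choi ⇑Λ - (dA : ℂ)⁻¹ • 1
  have hM : Mᴴ = M := (hCP.1.sub (by simp [IsHermitian, conjTranspose_smul])).eq
  have hG : GOfMap dA Λ = 1 - 1 / (dA : ℝ) ^ 2 - (Mᴴ * M).trace.re / (dA : ℝ) ^ 2 := by
    rw [hM]; exact GOfMap_eq_of_trace_preserving hdA hTP
  obtain ⟨hre, him⟩ := Complex.nonneg_iff.mp (posSemidef_conjTranspose_mul_self M).trace_nonneg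
  have hd2 : (0 : ℝ) < (dA : ℝ) ^ 2 := by positivity
  refine ⟨by rw [hG]; linarith [div_nonneg hre hd2.le], ?_⟩
  calc GOfMap dA Λ = 1 - 1 / (dA : ℝ) ^ 2 ↔ (Mᴴ * M).trace = 0 := by
        rw [hG, sub_eq_self, div_eq_zero_iff, or_iff_left hd2.ne', Complex.ext_iff, ← him]
        simp
    _ ↔ choi ⇑Λ = choi ⇑(depolarizing (Fin dA) ℂ) := by
        rw [trace_conjTranspose_mul_self_eq_zero_iff, choi_depolarizing, Fintype.card_fin,
          sub_eq_zero]
    _ ↔ _ := by rw [choi_inj, LinearMap.ext_iff]; simp [depolarizing_apply]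

/-- For a unital CPTP map `Λ` on `ℂ^{d_A}`, `G ≤ 1 − 1/d_A²`, with equality
iff `Λ` is the completely depolarizing map `T(X) = Tr(X) I/d_A`. -/
theorem otoc_max_depolarizing (dA : ℕ) (hdA : 0 < dA)
    (Λ : Matrix (Fin dA) (Fin dA) ℂ →ₗ[ℂ] Matrix (Fin dA) (Fin dA) ℂ)
    (hCP : (Matrix.of fun p q : Fin dA × Fin dA =>
      Λ (Matrix.single p.1 q.1 1) p.2 q.2).PosSemidef)
    (hTP : ∀ X, Matrix.trace (Λ X) = Matrix.trace X)
    (hunital : Λ 1 = 1) :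
    GOfMap dA (fun X => Λ X) ≤ 1 - 1 / (dA : ℝ)^2 ∧
    (GOfMap dA (fun X => Λ X) = 1 - 1 / (dA : ℝ)^2 ↔
      ∀ X, Λ X = (Matrix.trace X / dA) • (1 : Matrix (Fin dA) (Fin dA) ℂ)) :=
  otoc_max_depolarizing_general dA hdA Λ hCP hTP
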